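/- arXiv:2006.03908 — 2 statements merged into one kernel-verified Lean document; each statement's English description precedes it below -/
import Mathlib

section
/- Under two environments, if the optimal RGM loss equals the optimal IRM loss, then every representation optimal and feasible under RGM is also optimal and feasible under IRM; i.e., Φ_RGM ⊆ Φ_IRM. -/
/-- Under two environments, if the optimal RGM loss equals the optimal IRM
loss, then every representation optimal and feasible under RGM is also optimal
and feasible under IRM: `Φ_RGM ⊆ Φ_IRM`.

Here `L1 φ h` stands for `L¹(h ∘ φ)`, `L2 φ h` for `L²(h ∘ φ)`, and the
aggregate loss is their sum.  `F₁(φ), F₂(φ)` are the per-environment argmin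
sets of predictors; `F₋₁(φ) = F₂`-style: `F₋₁(φ) = argmin L²(·∘φ)` and
`F₋₂(φ) = argmin L¹(·∘φ)`, so the RGM constraint `F₋ₑ(φ) ⊆ Fₑ(φ)` reads
`argmin L² ⊆ argmin L¹` and `argmin L¹ ⊆ argmin L²`.  Losses are non-negative,
argmin sets are nonempty (F bounded and closed), and `L*_IRM` is the optimal
IRM value, hence a lower bound on `L(f ∘ φ)` over all IRM-feasible pairs. -/
theorem rgm_opt_subset_irm_opt {F Φ : Type*} (L1 L2 : Φ → F → ℝ)
    (LRGM LIRM : ℝ)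
    (hnonneg : ∀ φ h, 0 ≤ L1 φ h ∧ 0 ≤ L2 φ h)
    (hargmin1 : ∀ φ : Φ, ∃ h : F, ∀ g : F, L1 φ h ≤ L1 φ g)
    (hargmin2 : ∀ φ : Φ, ∃ h : F, ∀ g : F, L2 φ h ≤ L2 φ g)
    -- L*_IRM is the optimal IRM value: a lower bound over all feasible (φ, f)
    (hIRM_lb : ∀ φ : Φ, ∀ f : F,
      f ∈ {h : F | ∀ g, L1 φ h ≤ L1 φ g} ∩ {h : F | ∀ g, L2 φ h ≤ L2 φ g} →
      LIRM ≤ L1 φ f + L2 φ f)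
    (heq : LRGM = LIRM) :
    ∀ φ : Φ,
      -- φ ∈ Φ_RGM : RGM constraints hold and min over all f of L(f∘φ) equals L*_RGM
      ({h : F | ∀ g, L2 φ h ≤ L2 φ g} ⊆ {h : F | ∀ g, L1 φ h ≤ L1 φ g} ∧
       {h : F | ∀ g, L1 φ h ≤ L1 φ g} ⊆ {h : F | ∀ g, L2 φ h ≤ L2 φ g} ∧
       IsLeast (Set.range (fun f : F => L1 φ f + L2 φ f)) LRGM) →
      -- φ ∈ Φ_IRM : intersection nonempty and min over the intersection equals L*_IRM
      (({h : F | ∀ g, L1 φ h ≤ L1 φ g} ∩ {h : F | ∀ g, L2 φ h ≤ L2 φ g}).Nonempty ∧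
       IsLeast ((fun f : F => L1 φ f + L2 φ f) ''
         ({h : F | ∀ g, L1 φ h ≤ L1 φ g} ∩ {h : F | ∀ g, L2 φ h ≤ L2 φ g})) LIRM) := by
  intro φ ⟨h21, h12, hleast⟩
  obtain ⟨h1, hh1⟩ := hargmin1 φ
  have hmem : h1 ∈ {h : F | ∀ g, L1 φ h ≤ L1 φ g} ∩ {h : F | ∀ g, L2 φ h ≤ L2 φ g} :=
    ⟨hh1, h12 hh1⟩
  refine ⟨⟨h1, hmem⟩, ?_, ?_⟩
  · -- LIRM is attained at h1
    have hub : ∀ f : F, LRGM ≤ L1 φ f + L2 φ f := fun f => hleast.2 ⟨f, rfl⟩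
    obtain ⟨⟨f0, hf0⟩, -⟩ := hleast
    have h1le : L1 φ h1 + L2 φ h1 ≤ LRGM := by
      rw [← hf0]; exact add_le_add (hh1 f0) ((h12 hh1) f0)
    have : L1 φ h1 + L2 φ h1 = LIRM :=
      le_antisymm (heq ▸ h1le) (hIRM_lb φ h1 hmem)
    exact ⟨h1, hmem, this⟩
  · rintro x ⟨f, hf, rfl⟩
    exact hIRM_lb φ f hf
end

section
/- In the two-environment setting, if φ satisfies the RGM constraints F_{-e}(φ) ⊆ F_e(φ) for e=1,2 and f is any unconstrained minimizer of the aggregate loss L(·∘φ) over F, then f lies in F_1(φ) ∩ F_2(φ), i.e., f satisfies the IRM simultaneous-optimality constraint. -/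
/-- Two environments: if φ satisfies the RGM constraints
`F₋ₑ(φ) ⊆ Fₑ(φ)` for `e = 1, 2` (i.e. `argmin L² ⊆ argmin L¹` and
`argmin L¹ ⊆ argmin L²`), and `f` is any unconstrained minimizer of the
aggregate loss `L = L¹ + L²` over `F`, then `f ∈ F₁(φ) ∩ F₂(φ)`, i.e. `f`
satisfies the IRM simultaneous-optimality constraint.  Argmin sets are
nonempty. -/
theorem rgm_constraint_total_minimizer_in_both {F : Type*} (L1 L2 : F → ℝ)
    (hne1 : {h : F | ∀ g, L1 h ≤ L1 g}.Nonempty)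
    (hne2 : {h : F | ∀ g, L2 h ≤ L2 g}.Nonempty)
    (hc1 : {h : F | ∀ g, L2 h ≤ L2 g} ⊆ {h : F | ∀ g, L1 h ≤ L1 g})
    (hc2 : {h : F | ∀ g, L1 h ≤ L1 g} ⊆ {h : F | ∀ g, L2 h ≤ L2 g})
    (f : F) (hf : ∀ h : F, L1 f + L2 f ≤ L1 h + L2 h) :
    f ∈ {h : F | ∀ g, L1 h ≤ L1 g} ∩ {h : F | ∀ g, L2 h ≤ L2 g} := by
  obtain ⟨h1, hh1⟩ := hne1
  have hh2 : ∀ g, L2 h1 ≤ L2 g := hc2 hh1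
  have hsum : L1 f + L2 f ≤ L1 h1 + L2 h1 := hf h1
  have e1 : L1 f = L1 h1 := le_antisymm (by linarith [hh2 f]) (hh1 f)
  have e2 : L2 f = L2 h1 := le_antisymm (by linarith [hh1 f]) (hh2 f)
  exact ⟨fun g => e1 ▸ hh1 g, fun g => e2 ▸ hh2 g⟩
end
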